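/- For every directed acyclic graph G, the treewidth of the underlying undirected graph of G is at most the node scanwidth of G: tw(G) ≤ nsw(G). Concretely, given a tree extension T of G of node width k+1, the tree T with bags A_v ∪ {v} (where A_v is the set of proper ancestors of v in T having an out-neighbour in G among the descendants of v in T) is a tree decomposition of the underlying undirected graph of G of width at most k. -/

import Mathlib

/-- A rooted tree on the vertex set `V`, given by its root and parent function
(the parent of the root is the root itself, and every vertex reaches the root by
iterating the parent function). -/
structure RTree (V : Type*) where
  root : V
  parent : V → V
  parent_root : parent root = root
  reach : ∀ v, ∃ n, parent^[n] v = root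

namespace RTree

variable {V : Type*}

/-- `u` is an ancestor of `v` (possibly `u = v`). -/
def anc (T : RTree V) (u v : V) : Prop := ∃ n, T.parent^[n] v = u

/-- `u` is a proper ancestor of `v`. -/
def panc (T : RTree V) (u v : V) : Prop := T.anc u v ∧ u ≠ v

/-- The set of descendants of `v` in `T`, including `v` itself. -/
def Z (T : RTree V) (v : V) : Set V := {w | T.anc v w}

end RTree

/-- The set of in-neighbours (prey) of `w` in the directed graph `F`. -/
def inN {V : Type*} (F : V → V → Prop) (w : V) : Set V := {u | F u w}

/-- `F` is a DAG. -/
def Acyclic {V : Type*} (F : V → V → Prop) : Prop := ∀ v, ¬ Relation.TransGen F v v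

/-- `T` is a tree extension of the DAG `F`: for every arc `(u,v)` of `F`, `u` is a
proper ancestor of `v` in `T`. -/
def IsTreeExt {V : Type*} (F : V → V → Prop) (T : RTree V) : Prop :=
  ∀ u v, F u v → T.panc u v

/-- `A_v`: the set of proper ancestors of `v` in `T` that have an out-neighbour in `F`
among the descendants of `v` in `T`. -/
def Aset {V : Type*} (F : V → V → Prop) (T : RTree V) (v : V) : Set V :=
  {a | T.panc a v ∧ ∃ w, F a w ∧ w ∈ T.Z v}

/-- `(T, bags)` is a tree decomposition of the undirected graph `H`. -/
def IsTreeDecomp {V : Type*} {ι : Type*} (H : SimpleGraph V) (T : SimpleGraph ι)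
    (bags : ι → Set V) : Prop :=
  T.IsTree ∧
  (∀ u v : V, H.Adj u v → ∃ t, u ∈ bags t ∧ v ∈ bags t) ∧
  (∀ v : V, (T.induce {t | v ∈ bags t}).Connected)

/-- `H` has a tree decomposition of width at most `w`. -/
def HasTDWidth {V : Type*} (H : SimpleGraph V) (w : ℕ) : Prop :=
  ∃ (ι : Type) (T : SimpleGraph ι) (bags : ι → Set V),
    IsTreeDecomp H T bags ∧ ∀ t, (bags t).ncard ≤ w + 1

/-- The treewidth of `H`. -/
noncomputable def treewidth {V : Type*} (H : SimpleGraph V) : ℕ :=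
  sInf {w | HasTDWidth H w}

/-- The underlying undirected graph of the directed graph `F`. -/
def und {V : Type*} (F : V → V → Prop) : SimpleGraph V := SimpleGraph.fromRel F

/-- The undirected graph of the rooted tree `T` (edges between children and parents). -/
def treeGraph {V : Type*} (T : RTree V) : SimpleGraph V :=
  SimpleGraph.fromRel (fun a b => T.parent b = a ∧ b ≠ T.root)

/-- The node scanwidth of `F`, where the node width of `v` is `|A_v| + 1`. -/
noncomputable def nsw {V : Type*} (F : V → V → Prop) : ℕ :=
  sInf {k | ∃ T : RTree V, IsTreeExt F T ∧ ∀ v, (Aset F T v).ncard + 1 ≤ k}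

/-!
Along a tree extension every arc `(u, w)` of `F` has `u ∈ A_w`, so each edge of the underlying
graph lies in the bag of its lower end. A vertex `x` lies in the bag of `t ≠ x` exactly when `x`
is a proper ancestor of `t` with an out-neighbour below `t`; then the same holds for the parent of
`t` unless the parent is `x` itself, so the bags containing `x` form a subtree hanging from `x`.
Minimising over tree extensions gives `tw ≤ nsw`; a tree extension exists since an acyclic
relation extends to a linear order, whose predecessor function is the parent map of a path.
-/

namespace RTree

variable {V : Type*} (T : RTree V)

lemma iterate_parent_root (n : ℕ) : T.parent^[n] T.root = T.root :=
  Function.iterate_fixed T.parent_root n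

lemma parent_eq_self_iff {v : V} : T.parent v = v ↔ v = T.root := by
  refine ⟨fun h => ?_, fun h => h ▸ T.parent_root⟩
  obtain ⟨n, hn⟩ := T.reach v
  rwa [Function.iterate_fixed h n] at hn

lemma anc_refl (v : V) : T.anc v v := ⟨0, rfl⟩

lemma anc_parent_self (v : V) : T.anc (T.parent v) v := ⟨1, rfl⟩

lemma anc_trans {u v w : V} : T.anc u v → T.anc v w → T.anc u w := by
  rintro ⟨m, rfl⟩ ⟨n, rfl⟩
  exact ⟨m + n, Function.iterate_add_apply _ _ _ _⟩

lemma anc_parent_of_anc_of_ne {u v : V} (h : T.anc u v) (hne : u ≠ v) :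
    T.anc u (T.parent v) := by
  obtain ⟨_ | n, hn⟩ := h
  · exact absurd hn.symm hne
  · exact ⟨n, hn⟩

lemma eq_root_of_anc_root {u : V} (h : T.anc u T.root) : u = T.root := by
  obtain ⟨n, hn⟩ := h
  rw [← hn, T.iterate_parent_root]

lemma eq_root_of_isPeriodicPt {v : V} {p : ℕ} (hp : 0 < p)
    (h : Function.IsPeriodicPt T.parent p v) : v = T.root := by
  obtain ⟨k, hk⟩ := T.reach v
  have hsplit : p * k = (p * k - k) + k := (Nat.sub_add_cancel (Nat.le_mul_of_pos_left k hp)).symm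
  have := (h.mul_const k).eq
  rwa [hsplit, Function.iterate_add_apply, hk, T.iterate_parent_root, eq_comm] at this

lemma anc_antisymm {a b : V} : T.anc a b → T.anc b a → a = b := by
  rintro ⟨n, hn⟩ ⟨m, hm⟩
  rcases Nat.eq_zero_or_pos n with rfl | hpos
  · exact hn.symm
  · have ha : a = T.root := T.eq_root_of_isPeriodicPt (p := n + m) (by omega) <| by
      rw [Function.IsPeriodicPt, Function.IsFixedPt, Function.iterate_add_apply, hm, hn]
    subst ha
    rw [T.iterate_parent_root] at hm
    exact hm

lemma adj_parent {v : V} (hv : v ≠ T.root) : (treeGraph T).Adj v (T.parent v) := by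
  rw [treeGraph, SimpleGraph.fromRel_adj]
  exact ⟨fun h => hv (T.parent_eq_self_iff.mp h.symm), Or.inr ⟨rfl, hv⟩⟩

lemma connected_induce_of_parent_mem {S : Set V} {x : V} (hx : x ∈ S)
    (hanc : ∀ t ∈ S, T.anc x t) (hparent : ∀ t ∈ S, t ≠ x → T.parent t ∈ S) :
    ((treeGraph T).induce S).Connected := by
  have toX : ∀ (n : ℕ) (t : V) (ht : t ∈ S), T.parent^[n] t = x →
      ((treeGraph T).induce S).Reachable ⟨t, ht⟩ ⟨x, hx⟩ := by
    intro n
    induction n with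
    | zero => rintro t ht rfl; rfl
    | succ n ih =>
      intro t ht hn
      by_cases htx : t = x
      · subst htx; rfl
      have hroot : t ≠ T.root := by
        rintro rfl
        exact htx (T.eq_root_of_anc_root (hanc _ ht)).symm
      have hadj : ((treeGraph T).induce S).Adj ⟨t, ht⟩ ⟨T.parent t, hparent t ht htx⟩ :=
        T.adj_parent hroot
      exact hadj.reachable.trans (ih _ _ hn)
  rw [SimpleGraph.connected_iff]
  refine ⟨?_, ⟨⟨x, hx⟩⟩⟩
  rintro ⟨t₁, h₁⟩ ⟨t₂, h₂⟩
  obtain ⟨n₁, hn₁⟩ := hanc t₁ h₁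
  obtain ⟨n₂, hn₂⟩ := hanc t₂ h₂
  exact (toX n₁ t₁ h₁ hn₁).trans (toX n₂ t₂ h₂ hn₂).symm

lemma treeGraph_connected : (treeGraph T).Connected :=
  (SimpleGraph.induceUnivIso _).connected_iff.mp <|
    T.connected_induce_of_parent_mem (Set.mem_univ T.root) (fun t _ => T.reach t)
      (fun _ _ _ => Set.mem_univ _)

lemma anc_of_walk_deleteEdges {t : V} {a b : V}
    (p : ((treeGraph T).deleteEdges {s(t, T.parent t)}).Walk a b) (ha : T.anc t a) :
    T.anc t b := by
  induction p with
  | nil => exact ha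
  | @cons a c b hadj _ ih =>
    apply ih
    obtain ⟨hadj, hne_edge⟩ := SimpleGraph.deleteEdges_adj.mp hadj
    obtain ⟨hne, ⟨hpc, -⟩ | ⟨hpa, -⟩⟩ := SimpleGraph.fromRel_adj _ _ _ |>.mp hadj
    · exact T.anc_trans (hpc ▸ ha) (T.anc_parent_self c)
    · have hat : t ≠ a := by
        rintro rfl
        exact hne_edge (by rw [hpa]; rfl)
      exact hpa ▸ T.anc_parent_of_anc_of_ne ha hat

lemma isBridge_parent {t : V} (ht : t ≠ T.root) : (treeGraph T).IsBridge s(t, T.parent t) := by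
  rintro ⟨p⟩
  have h : t = T.parent t :=
    T.anc_antisymm (T.anc_of_walk_deleteEdges p (T.anc_refl t)) (T.anc_parent_self t)
  exact ht (T.parent_eq_self_iff.mp h.symm)

lemma treeGraph_isTree : (treeGraph T).IsTree := by
  refine ⟨T.treeGraph_connected, SimpleGraph.isAcyclic_iff_forall_adj_isBridge.mpr ?_⟩
  intro x y hxy
  obtain ⟨-, ⟨rfl, hy⟩ | ⟨rfl, hx⟩⟩ := SimpleGraph.fromRel_adj _ _ _ |>.mp hxy
  · rw [Sym2.eq_swap]
    exact T.isBridge_parent hy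
  · exact T.isBridge_parent hx

def ofPredOrder (α : Type*) [PartialOrder α] [OrderBot α] [PredOrder α] [IsPredArchimedean α] :
    RTree α where
  root := ⊥
  parent := Order.pred
  parent_root := Order.pred_bot
  reach _ := exists_pred_iterate_of_le bot_le

lemma ofPredOrder_panc {α : Type*} [PartialOrder α] [OrderBot α] [PredOrder α]
    [IsPredArchimedean α] {u v : α} (h : u < v) : (ofPredOrder α).panc u v :=
  ⟨exists_pred_iterate_of_le h.le, h.ne⟩

end RTree

section TreeExtension

variable {V : Type*} {F : V → V → Prop}

lemma Acyclic.exists_linearOrder (hacyc : Acyclic F) :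
    ∃ _ : LinearOrder V, ∀ u v, F u v → u < v := by
  let _ : PartialOrder V :=
    { le := Relation.ReflTransGen F
      le_refl := fun _ => .refl
      le_trans := fun _ _ _ => .trans
      le_antisymm := fun a b hab hba => by
        rcases Relation.reflTransGen_iff_eq_or_transGen.mp hab with rfl | hab
        · rfl
        · exact absurd (hab.trans_left hba) (hacyc a) }
  -- `LinearExtension V` is `V` carrying a Szpilrajn extension of the reachability order.
  refine ⟨(inferInstance : LinearOrder (LinearExtension V)), fun u v h => ?_⟩
  exact @lt_of_le_of_ne (LinearExtension V) _ u v (toLinearExtension.monotone (.single h))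
    (by rintro rfl; exact hacyc u (.single h))

lemma Acyclic.exists_isTreeExt [Finite V] [Nonempty V] (hacyc : Acyclic F) :
    ∃ T : RTree V, IsTreeExt F T := by
  classical
  obtain ⟨_, hlt⟩ := hacyc.exists_linearOrder
  have := Fintype.ofFinite V
  let _ : LocallyFiniteOrder V := Fintype.toLocallyFiniteOrder
  let _ : PredOrder V := LinearLocallyFiniteOrder.predOrder V
  let _ : OrderBot V := WellFoundedLT.toOrderBot V
  exact ⟨RTree.ofPredOrder V, fun u v h => RTree.ofPredOrder_panc (hlt u v h)⟩

end TreeExtension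

section Bags

variable {V : Type*} {F : V → V → Prop} {T : RTree V}

lemma notMem_Aset_self (v : V) : v ∉ Aset F T v := fun h => h.1.2 rfl

lemma ncard_Aset_union_singleton [Finite V] (v : V) :
    (Aset F T v ∪ {v}).ncard = (Aset F T v).ncard + 1 := by
  rw [Set.union_singleton, Set.ncard_insert_of_notMem (notMem_Aset_self v)]

lemma IsTreeExt.mem_Aset (hT : IsTreeExt F T) {u v : V} (h : F u v) : u ∈ Aset F T v :=
  ⟨hT u v h, v, h, T.anc_refl v⟩

lemma mem_Aset_parent_of_mem_Aset {x t : V} (h : x ∈ Aset F T t) (hx : T.parent t ≠ x) :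
    x ∈ Aset F T (T.parent t) := by
  obtain ⟨⟨hanc, hne⟩, w, hFw, hw⟩ := h
  exact ⟨⟨T.anc_parent_of_anc_of_ne hanc hne, hx.symm⟩, w, hFw,
    T.anc_trans (T.anc_parent_self t) hw⟩

lemma connected_induce_mem_Aset_union_singleton (x : V) :
    ((treeGraph T).induce {t | x ∈ Aset F T t ∪ {t}}).Connected := by
  have hAset : ∀ t, x ∈ Aset F T t ∪ {t} → t ≠ x → x ∈ Aset F T t := fun t ht htx =>
    ht.resolve_right htx.symm
  refine T.connected_induce_of_parent_mem (Or.inr rfl) (fun t ht => ?_) (fun t ht htx => ?_)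
  · by_cases htx : t = x
    · exact htx ▸ T.anc_refl t
    · exact (hAset t ht htx).1.1
  · by_cases hpx : T.parent t = x
    · exact Or.inr hpx.symm
    · exact Or.inl (mem_Aset_parent_of_mem_Aset (hAset t ht htx) hpx)

lemma IsTreeExt.isTreeDecomp (hT : IsTreeExt F T) :
    IsTreeDecomp (und F) (treeGraph T) (fun v => Aset F T v ∪ {v}) := by
  refine ⟨T.treeGraph_isTree, fun u v huv => ?_, connected_induce_mem_Aset_union_singleton⟩
  obtain ⟨-, h | h⟩ := SimpleGraph.fromRel_adj _ _ _ |>.mp huv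
  · exact ⟨v, Or.inl (hT.mem_Aset h), Or.inr rfl⟩
  · exact ⟨u, Or.inr rfl, Or.inl (hT.mem_Aset h)⟩

end Bags

section Treewidth

variable {V : Type} {F : V → V → Prop}

lemma hasTDWidth_zero_of_isEmpty [IsEmpty V] (H : SimpleGraph V) : HasTDWidth H 0 := by
  refine ⟨Unit, ⊥, fun _ => ∅, ⟨⟨?_, SimpleGraph.isAcyclic_bot⟩, ?_, ?_⟩, by simp⟩
  · exact (SimpleGraph.connected_iff _).mpr ⟨fun _ _ => .rfl, ⟨()⟩⟩
  · exact fun u => isEmptyElim u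
  · exact fun v => isEmptyElim v

lemma IsTreeExt.treewidth_le [Finite V] {T : RTree V} (hT : IsTreeExt F T) {k : ℕ}
    (hk : ∀ v, (Aset F T v).ncard + 1 ≤ k + 1) : treewidth (und F) ≤ k :=
  Nat.sInf_le (show HasTDWidth (und F) k from ⟨V, treeGraph T, _, hT.isTreeDecomp,
    fun v => (ncard_Aset_union_singleton v).trans_le (hk v)⟩)

lemma Acyclic.exists_isTreeExt_nsw [Finite V] [Nonempty V] (hacyc : Acyclic F) :
    ∃ T : RTree V, IsTreeExt F T ∧ ∀ v, (Aset F T v).ncard + 1 ≤ nsw F := by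
  obtain ⟨T, hT⟩ := hacyc.exists_isTreeExt
  have hne :
      {k | ∃ T : RTree V, IsTreeExt F T ∧ ∀ v, (Aset F T v).ncard + 1 ≤ k}.Nonempty :=
    ⟨Nat.card V, T, hT, fun v =>
      (ncard_Aset_union_singleton v).symm.trans_le (Set.ncard_le_card _)⟩
  exact Nat.sInf_mem hne

lemma Acyclic.treewidth_le_nsw [Finite V] (hacyc : Acyclic F) : treewidth (und F) ≤ nsw F := by
  cases isEmpty_or_nonempty V
  · exact (Nat.sInf_le (hasTDWidth_zero_of_isEmpty _)).trans (Nat.zero_le _)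
  obtain ⟨T, hT, hbound⟩ := hacyc.exists_isTreeExt_nsw
  obtain ⟨k, hk⟩ : ∃ k, nsw F = k + 1 :=
    Nat.exists_eq_add_one.mpr (Nat.lt_of_lt_of_le (Nat.succ_pos _) (hbound (Classical.arbitrary V)))
  exact (hT.treewidth_le (hk ▸ hbound)).trans (hk ▸ Nat.le_succ k)

end Treewidth

/-- For every DAG `F`, the treewidth of the underlying undirected graph of
`F` is at most the node scanwidth of `F`.  Concretely, given a tree extension `T` of `F`
of node width at most `k+1`, the tree `T` with bags `A_v ∪ {v}` is a tree decomposition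
of the underlying undirected graph of `F` of width at most `k`. -/
theorem stmt_11 {V : Type} [Fintype V] (F : V → V → Prop) (hacyc : Acyclic F) :
    treewidth (und F) ≤ nsw F ∧
    ∀ (T : RTree V) (k : ℕ), IsTreeExt F T →
      (∀ v, (Aset F T v).ncard + 1 ≤ k + 1) →
      IsTreeDecomp (und F) (treeGraph T) (fun v => Aset F T v ∪ {v}) ∧
        ∀ v, (Aset F T v ∪ {v}).ncard ≤ k + 1 :=
  ⟨hacyc.treewidth_le_nsw, fun _ _ hT hk =>
    ⟨hT.isTreeDecomp, fun v => (ncard_Aset_union_singleton v).trans_le (hk v)⟩⟩
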